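/- Let R = Z₈ × Z₂₇. Then the strong metric dimension of PIS(R) equals 11, and the clique number of PIS(R) equals 3. -/

import Mathlib

open SimpleGraph

/-- The prime ideal sum graph of a commutative ring. -/
def PIS (R : Type*) [CommRing R] :
    SimpleGraph {I : Ideal R // I ≠ ⊥ ∧ I ≠ ⊤} where
  Adj I J := I ≠ J ∧ (I.1 + J.1).IsPrime
  symm := by
    constructor
    rintro I J ⟨hne, hp⟩
    exact ⟨hne.symm, by rwa [add_comm]⟩
  loopless := by constructor; rintro I ⟨hne, -⟩; exact hne rfl

/-- `w` strongly resolves `u` and `v`. -/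
def StronglyResolves {V : Type*} (G : SimpleGraph V) (w u v : V) : Prop :=
  G.dist w v = G.dist w u + G.dist u v ∨ G.dist w u = G.dist w v + G.dist v u

/-- A strong resolving set. -/
def IsStrongResolvingSet {V : Type*} (G : SimpleGraph V) (S : Set V) : Prop :=
  ∀ u v : V, u ≠ v → ∃ w ∈ S, StronglyResolves G w u v

/-- The strong metric dimension. -/
noncomputable def sdim {V : Type*} (G : SimpleGraph V) : ℕ∞ :=
  ⨅ S : {S : Set V // IsStrongResolvingSet G S}, S.1.encard

/-!
The ideals of `ℤ₈` and `ℤ₂₇` are the chains `0 < (4) < (2) < 1` and `0 < (9) < (3) < 1`, so the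
ideals of `R = ℤ₈ × ℤ₂₇` are the pairs `(a, b) ∈ {0, 1, 2, 3}²`, sums of ideals are coordinatewise
maxima, and the only primes are `(2, 3)` and `(3, 2)`. This turns `PIS(R)` into an explicit graph on
14 vertices, which has diameter two. In a graph of diameter two a non-adjacent pair is strongly
resolved only by its own members, so the vertices outside a strong resolving set form a clique and
`sdim ≥ 14 - ω`. A proper 3-colouring and the triangle `{(0, 2), (3, 0), (3, 2)}` give `ω = 3`, and
the complement of this triangle is a strong resolving set of size 11: any two of its vertices are
told apart by an outside vertex adjacent to exactly one of them.
-/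

namespace SimpleGraph

variable {V W : Type*} {G : SimpleGraph V} {H : SimpleGraph W}

lemma Iso.dist_eq (e : G ≃g H) (u v : V) : H.dist (e u) (e v) = G.dist u v := by
  simp only [dist_eq_sInf]
  congr 1
  ext n
  constructor
  · rintro ⟨p, rfl⟩
    exact ⟨(p.map e.symm.toHom).copy (by simp) (by simp), by simp⟩
  · rintro ⟨p, rfl⟩
    exact ⟨p.map e.toHom, by simp⟩

lemma Iso.cliqueNum_eq (e : G ≃g H) : G.cliqueNum = H.cliqueNum := by
  have h (n : ℕ) : (∃ s, G.IsNClique n s) ↔ ∃ s, H.IsNClique n s := by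
    simpa only [CliqueFree, not_forall, not_not] using
      (not_cliqueFree_iff_top_isContained n).trans
        ((isContained_congr_right e).trans (not_cliqueFree_iff_top_isContained n).symm)
  simp only [cliqueNum, h]

lemma Iso.stronglyResolves_iff (e : G ≃g H) (w u v : V) :
    StronglyResolves H (e w) (e u) (e v) ↔ StronglyResolves G w u v := by
  simp only [StronglyResolves, e.dist_eq]

lemma Iso.isStrongResolvingSet_image (e : G ≃g H) {S : Set V} (hS : IsStrongResolvingSet G S) :
    IsStrongResolvingSet H (e '' S) := by
  intro u v huv
  obtain ⟨w, hw, hres⟩ := hS (e.symm u) (e.symm v) (e.symm.injective.ne huv)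
  refine ⟨e w, Set.mem_image_of_mem e hw, ?_⟩
  simpa using (e.stronglyResolves_iff w (e.symm u) (e.symm v)).2 hres

lemma sdim_le_encard {S : Set V} (hS : IsStrongResolvingSet G S) : sdim G ≤ S.encard :=
  iInf_le (fun S : {S : Set V // IsStrongResolvingSet G S} => S.1.encard) ⟨S, hS⟩

lemma Iso.sdim_le (e : G ≃g H) : sdim H ≤ sdim G :=
  le_iInf fun ⟨S, hS⟩ =>
    (sdim_le_encard (e.isStrongResolvingSet_image hS)).trans_eq (e.injective.encard_image S)

lemma Iso.sdim_eq (e : G ≃g H) : sdim G = sdim H :=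
  le_antisymm e.symm.sdim_le e.sdim_le

lemma StronglyResolves.symm {w u v : V} (h : StronglyResolves G w u v) :
    StronglyResolves G w v u :=
  h.symm

lemma stronglyResolves_self_left (u v : V) : StronglyResolves G u u v :=
  Or.inl (by rw [dist_self, zero_add])

lemma dist_eq_two_of_adj_adj {u v w : V} (huw : G.Adj u w) (hwv : G.Adj w v) (hne : u ≠ v)
    (hnadj : ¬ G.Adj u v) : G.dist u v = 2 := by
  have hle : G.dist u v ≤ 2 := (dist_le (huw.toWalk.append hwv.toWalk)).trans_eq (by simp)
  have hlt : 1 < G.dist u v :=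
    (huw.reachable.trans hwv.reachable).one_lt_dist_of_ne_of_not_adj hne hnadj
  omega

lemma stronglyResolves_of_adj {u v w : V} (huv : G.Adj u v) (hwu : G.Adj w u)
    (hwv : ¬ G.Adj w v) (hne : w ≠ v) : StronglyResolves G w u v := by
  left
  rw [dist_eq_two_of_adj_adj hwu huv hne hwv, dist_eq_one_iff_adj.2 hwu, dist_eq_one_iff_adj.2 huv]

lemma isStrongResolvingSet_compl {T : Set V}
    (hT : ∀ u ∈ T, ∀ v ∈ T, u ≠ v → G.Adj u v ∧ ∃ w ∉ T, Xor (G.Adj w u) (G.Adj w v)) :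
    IsStrongResolvingSet G Tᶜ := by
  intro u v huv
  by_cases hu : u ∈ T
  · by_cases hv : v ∈ T
    · obtain ⟨hadj, w, hw, ⟨hwu, hwv⟩ | ⟨hwv, hwu⟩⟩ := hT u hu v hv huv
      · exact ⟨w, hw, stronglyResolves_of_adj hadj hwu hwv fun h => hw (h ▸ hv)⟩
      · exact ⟨w, hw, (stronglyResolves_of_adj hadj.symm hwv hwu fun h => hw (h ▸ hu)).symm⟩
    · exact ⟨v, hv, (stronglyResolves_self_left v u).symm⟩
  · exact ⟨u, hu, stronglyResolves_self_left u v⟩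

section DiameterTwo

variable (hG : ∀ u v, u ≠ v → ¬ G.Adj u v → ∃ w, G.Adj u w ∧ G.Adj w v)
include hG

lemma reachable_of_forall_exists_adj_adj (u v : V) : G.Reachable u v := by
  by_cases huv : u = v
  · exact huv ▸ Reachable.refl u
  by_cases hadj : G.Adj u v
  · exact hadj.reachable
  obtain ⟨w, huw, hwv⟩ := hG u v huv hadj
  exact huw.reachable.trans hwv.reachable

lemma dist_le_two_of_forall_exists_adj_adj (u v : V) : G.dist u v ≤ 2 := by
  by_cases huv : u = v
  · simp [huv]
  by_cases hadj : G.Adj u v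
  · simp [dist_eq_one_iff_adj.2 hadj]
  obtain ⟨w, huw, hwv⟩ := hG u v huv hadj
  exact (dist_eq_two_of_adj_adj huw hwv huv hadj).le

/-- A non-adjacent pair is at the maximal distance two, so no third vertex can lie on a geodesic
through both of them. -/
lemma IsStrongResolvingSet.isClique_compl {S : Set V} (hS : IsStrongResolvingSet G S) :
    G.IsClique Sᶜ := by
  intro u hu v hv huv
  by_contra hadj
  obtain ⟨x, hux, hxv⟩ := hG u v huv hadj
  obtain ⟨w, hwS, hres⟩ := hS u v huv
  have hwu : 0 < G.dist w u :=
    (reachable_of_forall_exists_adj_adj hG w u).pos_dist_of_ne fun h => hu (h ▸ hwS)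
  have hwv : 0 < G.dist w v :=
    (reachable_of_forall_exists_adj_adj hG w v).pos_dist_of_ne fun h => hv (h ▸ hwS)
  have := dist_le_two_of_forall_exists_adj_adj hG w u
  have := dist_le_two_of_forall_exists_adj_adj hG w v
  rw [StronglyResolves, dist_eq_two_of_adj_adj hux hxv huv hadj, dist_comm (u := v),
    dist_eq_two_of_adj_adj hux hxv huv hadj] at hres
  omega

lemma card_sub_cliqueNum_le_sdim [Fintype V] :
    ((Fintype.card V - G.cliqueNum : ℕ) : ℕ∞) ≤ sdim G := by
  classical
  refine le_iInf fun ⟨S, hS⟩ => ?_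
  have hclique : Sᶜ.toFinset.card ≤ G.cliqueNum :=
    IsClique.card_le_cliqueNum (tc := by simpa using hS.isClique_compl hG)
  rw [Set.toFinset_compl, Finset.card_compl] at hclique
  rw [Set.encard_eq_coe_toFinset_card]
  exact_mod_cast (by omega : Fintype.card V - G.cliqueNum ≤ S.toFinset.card)

end DiameterTwo

lemma cliqueNum_eq_of_isNClique [Finite V] {n : ℕ} {s : Finset V} (hs : G.IsNClique n s)
    (hfree : G.CliqueFree (n + 1)) : G.cliqueNum = n := by
  refine le_antisymm ?_ (hs.card_eq ▸ hs.isClique.card_le_cliqueNum)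
  obtain ⟨t, ht⟩ := G.exists_isNClique_cliqueNum
  by_contra! hlt
  exact ht.not_cliqueFree (hfree.mono hlt)

end SimpleGraph

open SimpleGraph

section JoinGraph

variable {L M : Type*} [Lattice L] [BoundedOrder L] [Lattice M] [BoundedOrder M]

def joinGraph (P : L → Prop) : SimpleGraph {x : L // x ≠ ⊥ ∧ x ≠ ⊤} where
  Adj x y := x ≠ y ∧ P (x.1 ⊔ y.1)
  symm := ⟨fun x y h => ⟨h.1.symm, sup_comm x.1 y.1 ▸ h.2⟩⟩
  loopless := ⟨fun _ h => h.1 rfl⟩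

instance [DecidableEq L] (P : L → Prop) [DecidablePred P] : DecidableRel (joinGraph P).Adj :=
  fun x y => inferInstanceAs (Decidable (x ≠ y ∧ P (x.1 ⊔ y.1)))

def joinGraphIsoOfOrderIso (e : L ≃o M) {P : L → Prop} {Q : M → Prop}
    (h : ∀ x, P x ↔ Q (e x)) : joinGraph P ≃g joinGraph Q where
  toEquiv := e.toEquiv.subtypeEquiv fun x => by simp
  map_rel_iff' {x y} := by
    refine and_congr (Equiv.injective _).ne_iff ?_
    rw [h, map_sup]
    rfl

end JoinGraph

def OrderIso.prodCongr {α β γ δ : Type*} [Preorder α] [Preorder β] [Preorder γ] [Preorder δ]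
    (e₁ : α ≃o β) (e₂ : γ ≃o δ) : α × γ ≃o β × δ where
  toEquiv := e₁.toEquiv.prodCongr e₂.toEquiv
  map_rel_iff' := by simp [Prod.le_def]

lemma isCoatom_fin_four_iff (k : Fin 4) : IsCoatom k ↔ k = 2 := by
  revert k
  unfold IsCoatom
  decide

instance (n : ℕ) : IsPrincipalIdealRing (ZMod n) :=
  IsPrincipalIdealRing.of_surjective (Int.castRingHom (ZMod n)) ZMod.intCast_surjective

namespace Ideal

variable {R S : Type*} [CommRing R] [CommRing S]

noncomputable def orderIsoOfGenerators [IsPrincipalIdealRing R] {ι : Type*} [PartialOrder ι]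
    (g : ι → R) (hdvd : ∀ i j, g j ∣ g i ↔ i ≤ j) (hgen : ∀ a, ∃ i, a ∣ g i ∧ g i ∣ a) :
    ι ≃o Ideal R :=
  OrderIso.ofSurjective
    (OrderEmbedding.ofMapLEIff (fun i => span {g i}) fun i j => by
      rw [span_singleton_le_span_singleton, hdvd])
    fun I => by
      obtain ⟨a, rfl⟩ := (IsPrincipalIdealRing.principal I).principal
      obtain ⟨i, hai, hia⟩ := hgen a
      exact ⟨i, le_antisymm (span_singleton_le_span_singleton.2 hai)
        (span_singleton_le_span_singleton.2 hia)⟩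

lemma isPrime_prod_iff {I : Ideal R} {J : Ideal S} :
    (prod I J).IsPrime ↔ (I.IsPrime ∧ J = ⊤) ∨ (I = ⊤ ∧ J.IsPrime) := by
  simp [ideal_prod_prime, and_comm]

lemma isPrime_prod_orderIso_iff [IsArtinianRing R] [IsArtinianRing S] {α β : Type*}
    [PartialOrder α] [BoundedOrder α] [PartialOrder β] [BoundedOrder β]
    (e₁ : α ≃o Ideal R) (e₂ : β ≃o Ideal S) (a : α) (b : β) :
    (prod (e₁ a) (e₂ b)).IsPrime ↔ (IsCoatom a ∧ b = ⊤) ∨ (a = ⊤ ∧ IsCoatom b) := by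
  rw [isPrime_prod_iff]
  simp only [IsArtinianRing.isPrime_iff_isMaximal, isMaximal_def, e₁.isCoatom_iff,
    e₂.isCoatom_iff, _root_.map_eq_top_iff e₁, _root_.map_eq_top_iff e₂]

end Ideal

noncomputable def idealsZMod8 : Fin 4 ≃o Ideal (ZMod 8) :=
  Ideal.orderIsoOfGenerators ![0, 4, 2, 1] (by decide) (by decide)

noncomputable def idealsZMod27 : Fin 4 ≃o Ideal (ZMod 27) :=
  Ideal.orderIsoOfGenerators ![0, 9, 3, 1] (by decide) (by decide)

abbrev modelGraph : SimpleGraph {x : Fin 4 × Fin 4 // x ≠ ⊥ ∧ x ≠ ⊤} :=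
  joinGraph fun x => x = (2, 3) ∨ x = (3, 2)

/-- `PIS R` is by definition `joinGraph (·.IsPrime)` on `Ideal R`, since `I + J` is `I ⊔ J`. -/
noncomputable def modelGraphIsoPIS : modelGraph ≃g PIS (ZMod 8 × ZMod 27) :=
  joinGraphIsoOfOrderIso (Q := fun I => I.IsPrime)
    ((idealsZMod8.prodCongr idealsZMod27).trans Ideal.idealProdEquiv.symm) fun ⟨a, b⟩ => by
      change _ ↔ (Ideal.prod (idealsZMod8 a) (idealsZMod27 b)).IsPrime
      rw [Ideal.isPrime_prod_orderIso_iff, isCoatom_fin_four_iff, isCoatom_fin_four_iff]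
      revert a b
      decide

lemma card_modelGraph_vertices : Fintype.card {x : Fin 4 × Fin 4 // x ≠ ⊥ ∧ x ≠ ⊤} = 14 := by
  decide

set_option synthInstance.maxSize 2000 in
lemma modelGraph_exists_adj_adj :
    ∀ u v, u ≠ v → ¬ modelGraph.Adj u v → ∃ w, modelGraph.Adj u w ∧ modelGraph.Adj w v := by
  decide

def modelTriangle : Finset {x : Fin 4 × Fin 4 // x ≠ ⊥ ∧ x ≠ ⊤} :=
  {⟨(0, 2), by decide⟩, ⟨(3, 0), by decide⟩, ⟨(3, 2), by decide⟩}

lemma modelTriangle_isNClique : modelGraph.IsNClique 3 modelTriangle := by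
  decide

set_option synthInstance.maxSize 2000 in
lemma modelTriangle_separated : ∀ u ∈ modelTriangle, ∀ v ∈ modelTriangle, u ≠ v →
    modelGraph.Adj u v ∧ ∃ w ∉ modelTriangle, Xor (modelGraph.Adj w u) (modelGraph.Adj w v) := by
  decide

lemma card_compl_modelTriangle : modelTriangleᶜ.card = 11 := by
  rw [Finset.card_compl, card_modelGraph_vertices]
  rfl

/-- No join inside a colour class is `(2, 3)` or `(3, 2)`: joins of vertices below `(2, 2)` stay
below `(2, 2)`, and the other joins are `(3, 3)` or pair a `3` with a coordinate at most `1`. -/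
def modelColoring : modelGraph.Coloring (Fin 3) :=
  Coloring.mk (fun x => if x.1 = (2, 3) ∨ x.1 = (3, 2) then 2 else if x.1.1 = 3 ∨ x.1.2 = 3 then 1
    else 0) (by decide)

lemma modelGraph_cliqueNum : modelGraph.cliqueNum = 3 :=
  cliqueNum_eq_of_isNClique modelTriangle_isNClique
    (modelColoring.colorable.cliqueFree (by norm_num))

/-- For `R = ℤ₈ × ℤ₂₇`, the strong metric dimension of `PIS(R)` equals `11`
and the clique number of `PIS(R)` equals `3`. -/
theorem pis_sdim_cliqueNum_z8_z27 :
    sdim (PIS (ZMod 8 × ZMod 27)) = 11 ∧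
    (PIS (ZMod 8 × ZMod 27)).cliqueNum = 3 := by
  rw [← modelGraphIsoPIS.sdim_eq, ← modelGraphIsoPIS.cliqueNum_eq, modelGraph_cliqueNum]
  refine ⟨le_antisymm ?_ ?_, rfl⟩
  · calc sdim modelGraph ≤ ((modelTriangle : Set _)ᶜ).encard :=
          sdim_le_encard (isStrongResolvingSet_compl modelTriangle_separated)
      _ = 11 := by
          rw [← Finset.coe_compl, Set.encard_coe_eq_coe_finsetCard, card_compl_modelTriangle]
          rfl
  · calc (11 : ℕ∞) = ((Fintype.card _ - modelGraph.cliqueNum : ℕ) : ℕ∞) := by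
          rw [card_modelGraph_vertices, modelGraph_cliqueNum]
          rfl
      _ ≤ sdim modelGraph := card_sub_cliqueNum_le_sdim modelGraph_exists_adj_adj
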